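/- Suppose Assumptions (A1)–(A6) hold. Under a good run, the classifier sgn(f(x; W^{(t)})) correctly classifies all training datapoints (including those with flipped labels) for every step 1 ≤ t ≤ 1/(√n p α) − 2: y_i = sgn(f(x_i; W^{(t)})) for all i ∈ [n]. -/

import Mathlib

open MeasureTheory ProbabilityTheory BigOperators Filter
open scoped ENNReal NNReal

noncomputable section

namespace XOR

attribute [local instance] Classical.propDecidable

/-! ### Vectors, the network, and gradient descent -/

/-- Euclidean dot product on `Fin p → ℝ`. -/
def dot {p : ℕ} (x y : Fin p → ℝ) : ℝ := ∑ k, x k * y k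

/-- Euclidean norm. -/
def nrm {p : ℕ} (x : Fin p → ℝ) : ℝ := Real.sqrt (dot x x)

/-- The ReLU activation. -/
def relu (z : ℝ) : ℝ := max z 0

/-- (A choice of) the derivative of the ReLU. -/
def reluD (z : ℝ) : ℝ := if 0 < z then 1 else 0

/-- The two-layer ReLU network `f(x; W) = ∑ j, a j * φ(⟨w_j, x⟩)`. -/
def nnet {p m : ℕ} (a : Fin m → ℝ) (W : Fin m → Fin p → ℝ) (x : Fin p → ℝ) : ℝ :=
  ∑ j, a j * relu (dot (W j) x)

/-- `g(z) = -ℓ'(z) = 1/(1+e^z)` for the logistic loss `ℓ(z) = log(1+e^{-z})`. -/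
def lossG (z : ℝ) : ℝ := 1 / (1 + Real.exp z)

/-- One step of gradient descent on the first-layer weights:
`w_j^{(t+1)} = w_j^{(t)} + (α a_j / n) ∑ i g_i^{(t)} φ'(⟨w_j^{(t)}, x_i⟩) y_i x_i`. -/
def gdStep {n p m : ℕ} (α : ℝ) (X : Fin n → Fin p → ℝ) (Y : Fin n → ℝ)
    (a : Fin m → ℝ) (W : Fin m → Fin p → ℝ) : Fin m → Fin p → ℝ :=
  fun j k => W j k + (α * a j / n) *
    ∑ i, lossG (Y i * nnet a W (X i)) * reluD (dot (W j) (X i)) * (Y i * X i k)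

/-- The gradient descent iterates `W^{(t)}`. -/
def gdIter {n p m : ℕ} (α : ℝ) (X : Fin n → Fin p → ℝ) (Y : Fin n → ℝ)
    (a : Fin m → ℝ) (W0 : Fin m → Fin p → ℝ) : ℕ → Fin m → Fin p → ℝ
  | 0 => W0
  | t + 1 => gdStep α X Y a (gdIter α X Y a W0 t)

/-- Frobenius norm of the first-layer weight matrix. -/
def frob {p m : ℕ} (W : Fin m → Fin p → ℝ) : ℝ :=
  Real.sqrt (∑ j, ∑ k, (W j k) ^ 2)

/-! ### The XOR cluster structure -/

/-- The four cluster centers `+μ₁, -μ₁, +μ₂, -μ₂`, indexed by `Fin 4`. -/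
def ctr {p : ℕ} (μ1 μ2 : Fin p → ℝ) : Fin 4 → Fin p → ℝ := ![μ1, -μ1, μ2, -μ2]

/-- The clean label of each cluster. -/
def cl : Fin 4 → ℝ := ![1, 1, -1, -1]

/-- The index of the opposite center: `ν ↦ -ν`. -/
def negIdx : Fin 4 → Fin 4 := ![1, 0, 3, 2]

/-- The set of the four cluster centers. -/
def centers {p : ℕ} (μ1 μ2 : Fin p → ℝ) : Set (Fin p → ℝ) := {μ1, -μ1, μ2, -μ2}

/-- Structural hypotheses on the means: orthogonality and equal norms. -/
def MeanHyp {p : ℕ} (μ1 μ2 : Fin p → ℝ) : Prop :=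
  dot μ1 μ2 = 0 ∧ nrm μ1 = nrm μ2

/-- Basic constraints on the parameters: `η ∈ [0, 1/2)`, `α > 0`, `ω_init ≥ 0`. -/
def ParamHyp (η α winit : ℝ) : Prop :=
  0 ≤ η ∧ η < 1 / 2 ∧ 0 < α ∧ 0 ≤ winit

/-- Assumptions (A1)–(A6), where `μn = ‖μ‖`:
(A1) `‖μ‖² ≥ C n^{0.51} √p`, (A2) `p ≥ C n² ‖μ‖²`, (A3) `η ≤ 1/C`,
(A4) `α ≤ 1/(C n p)`, (A5) `ω_init n m^{3/2} p ≤ α ‖μ‖²`, (A6) `m ≥ C n^{0.02}`. -/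
def Assum (C : ℝ) (n p m : ℕ) (μn η α winit : ℝ) : Prop :=
  C * (n : ℝ) ^ (0.51 : ℝ) * Real.sqrt p ≤ μn ^ 2 ∧
  C * (n : ℝ) ^ 2 * μn ^ 2 ≤ (p : ℝ) ∧
  η ≤ 1 / C ∧
  α ≤ 1 / (C * n * p) ∧
  winit * n * (m : ℝ) ^ ((3 : ℝ) / 2) * (p : ℝ) ≤ α * μn ^ 2 ∧
  C * (n : ℝ) ^ (0.02 : ℝ) ≤ (m : ℝ)

/-! ### The probability model

The randomness is generated from canonical sources: for each training sample a
uniform cluster index in `Fin 4`, standard Gaussian noise in `ℝ^p`, and a standard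
Gaussian variable whose CDF-value is used as the (uniform) label-flip coin; for
the network, uniform signs in `Bool` for the second layer, and standard Gaussian
first-layer noise which is scaled by `ω_init`. -/

abbrev Vec (p : ℕ) := Fin p → ℝ

/-- Sample space: cluster indices, data noise, flip coins, second-layer signs,
and unscaled first-layer initialization. -/
abbrev Sample (n p m : ℕ) :=
  (Fin n → Fin 4) × (Fin n → Vec p) × (Fin n → ℝ) × (Fin m → Bool) × (Fin m → Vec p)

/-- The standard Gaussian measure on `ℝ^p`. -/
def stdG (p : ℕ) : Measure (Vec p) := Measure.pi fun _ => gaussianReal 0 1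

/-- The joint law of all randomness. -/
def sampleMeasure (n p m : ℕ) : Measure (Sample n p m) :=
  ((PMF.uniformOfFintype (Fin n → Fin 4)).toMeasure).prod
    ((Measure.pi fun _ : Fin n => stdG p).prod
      ((Measure.pi fun _ : Fin n => gaussianReal 0 1).prod
        (((PMF.uniformOfFintype (Fin m → Bool)).toMeasure).prod
          (Measure.pi fun _ : Fin m => stdG p))))

/-- The training inputs `x_i = x̄_i + ξ_i`. -/
def trainX {n p m : ℕ} (μ1 μ2 : Vec p) (ω : Sample n p m) : Fin n → Vec p :=
  fun i => ctr μ1 μ2 (ω.1 i) + ω.2.1 i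

/-- The (possibly flipped) training labels: the label is flipped iff the uniform
variable `Φ(g_i)` is `< η`, which happens with probability `η`. -/
def trainY {n p m : ℕ} (η : ℝ) (ω : Sample n p m) : Fin n → ℝ :=
  fun i => (if cdf (gaussianReal 0 1) (ω.2.2.1 i) < η then -1 else 1) * cl (ω.1 i)

/-- The second-layer weights `a_j ∈ {± 1/√m}`. -/
def secondLayer {n p m : ℕ} (ω : Sample n p m) : Fin m → ℝ :=
  fun j => if ω.2.2.2.1 j then 1 / Real.sqrt m else -(1 / Real.sqrt m)

/-- The initialization `w_j^{(0)} ∼ N(0, ω_init² I_p)`. -/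
def initW {n p m : ℕ} (winit : ℝ) (ω : Sample n p m) : Fin m → Vec p :=
  fun j k => winit * ω.2.2.2.2 j k

/-- The trained first-layer weights `W^{(t)}`. -/
def netW {n p m : ℕ} (μ1 μ2 : Vec p) (η α winit : ℝ) (ω : Sample n p m) (t : ℕ) :
    Fin m → Vec p :=
  gdIter α (trainX μ1 μ2 ω) (trainY η ω) (secondLayer ω) (initW winit ω) t

/-- The clean test distribution `P_clean` on `ℝ^p × ℝ`. -/
def Pclean (p : ℕ) (μ1 μ2 : Vec p) : Measure (Vec p × ℝ) :=
  Measure.map (fun w : Fin 4 × Vec p => (ctr μ1 μ2 w.1 + w.2, cl w.1))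
    (((PMF.uniformOfFintype (Fin 4)).toMeasure).prod (stdG p))

/-- The Gaussian measure `N(ν, I_p)` at center index `q`. -/
def gaussAt {p : ℕ} (μ1 μ2 : Vec p) (q : Fin 4) : Measure (Vec p) :=
  Measure.map (fun z => ctr μ1 μ2 q + z) (stdG p)

/-- The clean test error of the classifier `sgn ∘ f(·; a, W)`. -/
def testErr {p m : ℕ} (μ1 μ2 : Vec p) (a : Fin m → ℝ) (W : Fin m → Vec p) : ℝ :=
  ((Pclean p μ1 μ2) {xy : Vec p × ℝ | xy.2 ≠ Real.sign (nnet a W xy.1)}).toReal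

/-! ### Counts, alignment, and the "good run" conditions -/

/-- `c_ν`: number of clean samples in the cluster with center index `q`. -/
def cntC {n : ℕ} (u : Fin n → Fin 4) (Y : Fin n → ℝ) (q : Fin 4) : ℕ :=
  (Finset.univ.filter fun i => u i = q ∧ Y i = cl q).card

/-- `n_ν`: number of noisy samples in the cluster with center index `q`. -/
def cntN {n : ℕ} (u : Fin n → Fin 4) (Y : Fin n → ℝ) (q : Fin 4) : ℕ :=
  (Finset.univ.filter fun i => u i = q ∧ Y i ≠ cl q).card

/-- The clean samples of cluster `q` activating neuron `j` for weights `W`. -/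
def actC {n p m : ℕ} (u : Fin n → Fin 4) (X : Fin n → Vec p) (Y : Fin n → ℝ)
    (W : Fin m → Vec p) (q : Fin 4) (j : Fin m) : Finset (Fin n) :=
  Finset.univ.filter fun i => u i = q ∧ Y i = cl q ∧ 0 < dot (W j) (X i)

/-- The noisy samples of cluster `q` activating neuron `j` for weights `W`. -/
def actN {n p m : ℕ} (u : Fin n → Fin 4) (X : Fin n → Vec p) (Y : Fin n → ℝ)
    (W : Fin m → Vec p) (q : Fin 4) (j : Fin m) : Finset (Fin n) :=
  Finset.univ.filter fun i => u i = q ∧ Y i ≠ cl q ∧ 0 < dot (W j) (X i)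

/-- `d_{ν,j} = |C_{ν,j}| - |N_{ν,j}|`. -/
def dval {n p m : ℕ} (u : Fin n → Fin 4) (X : Fin n → Vec p) (Y : Fin n → ℝ)
    (W : Fin m → Vec p) (q : Fin 4) (j : Fin m) : ℤ :=
  ((actC u X Y W q j).card : ℤ) - ((actN u X Y W q j).card : ℤ)

/-- `D_{ν,j} = d_{ν,j} - d_{-ν,j}`. -/
def Dval {n p m : ℕ} (u : Fin n → Fin 4) (X : Fin n → Vec p) (Y : Fin n → ℝ)
    (W : Fin m → Vec p) (q : Fin 4) (j : Fin m) : ℤ :=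
  dval u X Y W q j - dval u X Y W (negIdx q) j

/-- Neuron `j` is `(ν, κ)`-aligned (w.r.t. the initialization `W0`). -/
def Aligned {n p m : ℕ} (u : Fin n → Fin 4) (X : Fin n → Vec p) (Y : Fin n → ℝ)
    (W0 : Fin m → Vec p) (κ : ℝ) (q : Fin 4) (j : Fin m) : Prop :=
  (n : ℝ) ^ ((1 : ℝ) / 2 - κ) < (Dval u X Y W0 q j : ℝ) ∧
  max ((dval u X Y W0 (negIdx q) j : ℝ)) ((dval u X Y W0 q j : ℝ)) <
    min (cntC u Y q : ℝ) (cntC u Y (negIdx q) : ℝ) -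
      2 * ((cntN u Y q : ℝ) + (cntN u Y (negIdx q) : ℝ)) - Real.sqrt n

/-- Condition (B1). -/
def CondB1 {n p : ℕ} (μ1 μ2 : Vec p) (u : Fin n → Fin 4) (X : Fin n → Vec p) : Prop :=
  ∀ k : Fin n,
    (∀ ν ∈ centers μ1 μ2, dot (X k - ctr μ1 μ2 (u k)) ν ≤
        10 * Real.sqrt (Real.log n) * nrm μ1) ∧
    |nrm (X k) ^ 2 - p - nrm μ1 ^ 2| ≤ 10 * Real.sqrt (p * Real.log n)

/-- Condition (B2). -/
def CondB2 {n p : ℕ} (μ1 μ2 : Vec p) (u : Fin n → Fin 4) (X : Fin n → Vec p) : Prop :=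
  ∀ i k : Fin n, i ≠ k →
    |dot (X i) (X k) - dot (ctr μ1 μ2 (u i)) (ctr μ1 μ2 (u k))| ≤
      10 * Real.sqrt (p * Real.log n)

/-- Condition (B3). -/
def CondB3 {n : ℕ} (ε η : ℝ) (u : Fin n → Fin 4) (Y : Fin n → ℝ) : Prop :=
  ∀ q : Fin 4,
    |(cntC u Y q : ℝ) + (cntN u Y q : ℝ) - n / 4| ≤ Real.sqrt (ε * n * Real.log n) ∧
    |(cntN u Y q : ℝ) - η * ((cntC u Y q : ℝ) + (cntN u Y q : ℝ))| ≤
      Real.sqrt (ε * η * n * Real.log n)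

/-- Condition (B4). -/
def CondB4 {n : ℕ} (ε η : ℝ) (u : Fin n → Fin 4) (Y : Fin n → ℝ) : Prop :=
  ∀ q : Fin 4,
    (n : ℝ) ^ ((1 : ℝ) / 2 - ε) ≤
      |(cntC u Y q : ℝ) + (cntN u Y q : ℝ) -
        (cntC u Y (negIdx q) : ℝ) - (cntN u Y (negIdx q) : ℝ)| ∧
    η * (n : ℝ) ^ ((1 : ℝ) / 2 - ε) ≤ |(cntN u Y q : ℝ) - (cntN u Y (negIdx q) : ℝ)|

/-- Conditions (B1)–(B4) together. -/
def CondB {n p : ℕ} (ε : ℝ) (μ1 μ2 : Vec p) (η : ℝ) (u : Fin n → Fin 4)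
    (X : Fin n → Vec p) (Y : Fin n → ℝ) : Prop :=
  CondB1 μ1 μ2 u X ∧ CondB2 μ1 μ2 u X ∧ CondB3 ε η u Y ∧ CondB4 ε η u Y

/-- Condition (C1): `‖W^{(0)}‖_F² ≤ (3/2) ω_init² m p`. -/
def CondC1 {p m : ℕ} (winit : ℝ) (W0 : Fin m → Vec p) : Prop :=
  ∑ j, ∑ k, (W0 j k) ^ 2 ≤ 3 / 2 * winit ^ 2 * m * p

/-- The positive neurons `J_Pos`. -/
def posNeurons {m : ℕ} (a : Fin m → ℝ) : Finset (Fin m) :=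
  Finset.univ.filter fun j => 0 < a j

/-- The negative neurons `J_Neg`. -/
def negNeurons {m : ℕ} (a : Fin m → ℝ) : Finset (Fin m) :=
  Finset.univ.filter fun j => a j < 0

/-- Condition (C2): `|J_Pos| ≥ m/3` and `|J_Neg| ≥ m/3`. -/
def CondC2 {m : ℕ} (a : Fin m → ℝ) : Prop :=
  (m : ℝ) / 3 ≤ (posNeurons a).card ∧ (m : ℝ) / 3 ≤ (negNeurons a).card

/-- Condition (D1). -/
def CondD1 {n p m : ℕ} (u : Fin n → Fin 4) (X : Fin n → Vec p)
    (a : Fin m → ℝ) (W0 : Fin m → Vec p) : Prop :=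
  ∀ i : Fin n,
    (m : ℝ) / 7 ≤ ((posNeurons a).filter fun j => 0 < dot (W0 j) (X i)).card ∧
    (m : ℝ) / 7 ≤ ((negNeurons a).filter fun j => 0 < dot (W0 j) (X i)).card

/-- Condition (D2). -/
def CondD2 {n p m : ℕ} (ε : ℝ) (u : Fin n → Fin 4) (X : Fin n → Vec p) (Y : Fin n → ℝ)
    (a : Fin m → ℝ) (W0 : Fin m → Vec p) : Prop :=
  ∀ q : Fin 4, ∀ κ : ℝ, 0 ≤ κ → κ < 1 / 2 →
    (m : ℝ) * (n : ℝ) ^ (-(10 * ε)) ≤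
      ((posNeurons a).filter fun j => Aligned u X Y W0 κ q j).card ∧
    (m : ℝ) * (n : ℝ) ^ (-(10 * ε)) ≤
      ((negNeurons a).filter fun j => Aligned u X Y W0 κ q j).card

/-- Condition (D3). -/
def CondD3 {n p m : ℕ} (ε : ℝ) (u : Fin n → Fin 4) (X : Fin n → Vec p) (Y : Fin n → ℝ)
    (a : Fin m → ℝ) (W0 : Fin m → Vec p) : Prop :=
  ∀ q : Fin 4,
    (1 - 10 * (n : ℝ) ^ (-(20 * ε))) * (posNeurons a).card ≤
      ((posNeurons a).filter fun j =>
        Aligned u X Y W0 (20 * ε) q j ∨ Aligned u X Y W0 (20 * ε) (negIdx q) j).card ∧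
    (1 - 10 * (n : ℝ) ^ (-(20 * ε))) * (negNeurons a).card ≤
      ((negNeurons a).filter fun j =>
        Aligned u X Y W0 (20 * ε) q j ∨ Aligned u X Y W0 (20 * ε) (negIdx q) j).card

/-- Condition (D4). -/
def CondD4 {n p m : ℕ} (u : Fin n → Fin 4) (X : Fin n → Vec p) (Y : Fin n → ℝ)
    (a : Fin m → ℝ) (W0 : Fin m → Vec p) : Prop :=
  ∀ q : Fin 4, ∀ κ : ℝ, 0 ≤ κ → κ < 1 / 2 →
    ((n : ℝ) / 10) * ((posNeurons a).filter fun j => Aligned u X Y W0 κ q j).card ≤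
      (∑ j ∈ (posNeurons a).filter (fun j => Aligned u X Y W0 κ q j),
        ((cntC u Y q : ℝ) - (cntN u Y q : ℝ) - (dval u X Y W0 (negIdx q) j : ℝ))) ∧
    ((n : ℝ) / 10) * ((negNeurons a).filter fun j => Aligned u X Y W0 κ q j).card ≤
      (∑ j ∈ (negNeurons a).filter (fun j => Aligned u X Y W0 κ q j),
        ((cntC u Y q : ℝ) - (cntN u Y q : ℝ) - (dval u X Y W0 (negIdx q) j : ℝ)))

/-- Conditions (D1)–(D4) together. -/
def CondD {n p m : ℕ} (ε : ℝ) (u : Fin n → Fin 4) (X : Fin n → Vec p) (Y : Fin n → ℝ)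
    (a : Fin m → ℝ) (W0 : Fin m → Vec p) : Prop :=
  CondD1 u X a W0 ∧ CondD2 ε u X Y a W0 ∧ CondD3 ε u X Y a W0 ∧ CondD4 u X Y a W0

/-- A "good run": conditions (B1)–(B4), (C1)–(C2) and (D1)–(D4) all hold. -/
def GoodRun {n p m : ℕ} (ε : ℝ) (μ1 μ2 : Vec p) (η winit : ℝ) (u : Fin n → Fin 4)
    (X : Fin n → Vec p) (Y : Fin n → ℝ) (a : Fin m → ℝ) (W0 : Fin m → Vec p) : Prop :=
  CondB ε μ1 μ2 η u X Y ∧ CondC1 winit W0 ∧ CondC2 a ∧ CondD ε u X Y a W0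

/-- Labels take values in `{±1}`. -/
def ModelData {n : ℕ} (Y : Fin n → ℝ) : Prop := ∀ i, Y i = 1 ∨ Y i = -1

/-- Second-layer weights take values in `{±1/√m}`. -/
def ModelLayer {m : ℕ} (a : Fin m → ℝ) : Prop :=
  ∀ j, a j = 1 / Real.sqrt m ∨ a j = -(1 / Real.sqrt m)

end XOR

namespace XOR

attribute [local instance] Classical.propDecidable


/-! ### Auxiliary lemmas for the proof -/

lemma dot_comm' {p : ℕ} (x y : Vec p) : dot x y = dot y x :=
  Finset.sum_congr rfl fun k _ => mul_comm _ _

lemma dot_self_nonneg' {p : ℕ} (x : Vec p) : 0 ≤ dot x x :=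
  Finset.sum_nonneg fun k _ => mul_self_nonneg _

lemma sq_nrm {p : ℕ} (x : Vec p) : nrm x ^ 2 = dot x x := Real.sq_sqrt (dot_self_nonneg' x)

lemma dot_neg_left' {p : ℕ} (x y : Vec p) : dot (-x) y = -dot x y := by
  simp [dot, neg_mul, Finset.sum_neg_distrib]

lemma dot_neg_right' {p : ℕ} (x y : Vec p) : dot x (-y) = -dot x y := by
  simp [dot, mul_neg, Finset.sum_neg_distrib]

lemma abs_dot_le' {p : ℕ} (x y : Vec p) : |dot x y| ≤ nrm x * nrm y := by
  have h := Finset.sum_mul_sq_le_sq_mul_sq Finset.univ x y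
  have hx : ∑ k, x k ^ 2 = dot x x := Finset.sum_congr rfl fun k _ => sq (x k)
  have hy : ∑ k, y k ^ 2 = dot y y := Finset.sum_congr rfl fun k _ => sq (y k)
  rw [hx, hy] at h
  have habs : |dot x y| = Real.sqrt ((dot x y) ^ 2) := (Real.sqrt_sq_eq_abs _).symm
  rw [habs, nrm, nrm, ← Real.sqrt_mul (dot_self_nonneg' x)]
  exact Real.sqrt_le_sqrt h

lemma abs_dot_ctr {p : ℕ} {μ1 μ2 : Vec p} (hμ : MeanHyp μ1 μ2) (q r : Fin 4) :
    |dot (ctr μ1 μ2 q) (ctr μ1 μ2 r)| ≤ nrm μ1 ^ 2 := by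
  obtain ⟨h12, hnn⟩ := hμ
  have h21 : dot μ2 μ1 = 0 := by rw [dot_comm']; exact h12
  have h11 : dot μ1 μ1 = nrm μ1 ^ 2 := (sq_nrm μ1).symm
  have h22 : dot μ2 μ2 = nrm μ1 ^ 2 := by rw [← sq_nrm, hnn]
  have hnn2 : (0:ℝ) ≤ nrm μ1 ^ 2 := sq_nonneg _
  fin_cases q <;> fin_cases r <;>
    simp [ctr, dot_neg_left', dot_neg_right', h11, h22, h12, h21, abs_of_nonneg hnn2, hnn2]

lemma relu_nonneg' (z : ℝ) : 0 ≤ relu z := le_max_right _ _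
lemma relu_le_abs' (z : ℝ) : relu z ≤ |z| := max_le (le_abs_self z) (abs_nonneg z)
lemma relu_of_pos' {z : ℝ} (hz : 0 < z) : relu z = z := max_eq_left hz.le

lemma lossG_pos' (z : ℝ) : 0 < lossG z := by
  have h : (0:ℝ) < 1 + Real.exp z := by positivity
  exact div_pos one_pos h

lemma lossG_le_one' (z : ℝ) : lossG z ≤ 1 := by
  rw [lossG, div_le_one (by positivity)]
  have := (Real.exp_pos z).le; linarith

lemma lossG_ge_quarter {z : ℝ} (hz : z ≤ 1) : 1/4 ≤ lossG z := by
  have h1 : Real.exp z ≤ Real.exp 1 := Real.exp_le_exp.mpr hz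
  have h2 : Real.exp 1 < 2.7182818286 := Real.exp_one_lt_d9
  rw [lossG, le_div_iff₀ (by positivity)]
  nlinarith

lemma reluD_nonneg (z : ℝ) : 0 ≤ reluD z := by unfold reluD; split <;> norm_num
lemma reluD_le_one (z : ℝ) : reluD z ≤ 1 := by unfold reluD; split <;> norm_num

lemma dot_gdStep {n p m : ℕ} (α : ℝ) (X : Fin n → Vec p) (Y : Fin n → ℝ)
    (a : Fin m → ℝ) (W : Fin m → Vec p) (j : Fin m) (v : Vec p) :
    dot (gdStep α X Y a W j) v = dot (W j) v + (α * a j / n) *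
      ∑ k, lossG (Y k * nnet a W (X k)) * reluD (dot (W j) (X k)) * (Y k * dot (X k) v) := by
  unfold dot gdStep
  rw [Finset.sum_congr rfl fun k' _ => add_mul (W j k') _ (v k'), Finset.sum_add_distrib]
  congr 1
  rw [Finset.mul_sum]
  calc ∑ k', ((α * a j / ↑n) * ∑ k, lossG (Y k * nnet a W (X k)) * reluD (dot (W j) (X k)) * (Y k * X k k')) * v k'
      = ∑ k', ∑ k, (α * a j / ↑n) * (lossG (Y k * nnet a W (X k)) * reluD (dot (W j) (X k)) * Y k * (X k k' * v k')) := by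
        refine Finset.sum_congr rfl fun k' _ => ?_
        rw [Finset.mul_sum, Finset.sum_mul]
        exact Finset.sum_congr rfl fun k _ => by ring
    _ = ∑ k, ∑ k' : Fin p, (α * a j / ↑n) * (lossG (Y k * nnet a W (X k)) * reluD (dot (W j) (X k)) * Y k * (X k k' * v k')) := Finset.sum_comm
    _ = ∑ k, (α * a j / ↑n) * (lossG (Y k * nnet a W (X k)) * reluD (dot (W j) (X k)) * (Y k * ∑ k', X k k' * v k')) := by
        refine Finset.sum_congr rfl fun k _ => ?_
        rw [Finset.mul_sum, Finset.mul_sum, Finset.mul_sum]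
        exact Finset.sum_congr rfl fun k' _ => by ring

set_option maxHeartbeats 4000000 in
/-- Theorem 4.10, overfitting: under a good run, the
classifier `sgn(f(·; W^{(t)}))` correctly classifies every training datapoint
(including those with flipped labels) for every `1 ≤ t ≤ 1/(√n p α) − 2`. -/
theorem training_points_fitted :
    ∀ ε : ℝ, 0 < ε → ε < 1 / 4000 →
      ∃ (C₀ : ℝ) (N₀ : ℕ),
        ∀ C : ℝ, C₀ ≤ C →
        ∀ (n p m : ℕ) (μ1 μ2 : Vec p) (η α winit : ℝ)
          (u : Fin n → Fin 4) (X : Fin n → Vec p) (Y : Fin n → ℝ)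
          (a : Fin m → ℝ) (W0 : Fin m → Vec p),
          N₀ ≤ n →
          MeanHyp μ1 μ2 →
          ParamHyp η α winit →
          Assum C n p m (nrm μ1) η α winit →
          ModelData Y →
          ModelLayer a →
          GoodRun ε μ1 μ2 η winit u X Y a W0 →
          ∀ t : ℕ, 1 ≤ t → (t : ℝ) ≤ 1 / (Real.sqrt n * p * α) - 2 →
            ∀ i : Fin n,
              Y i = Real.sign (nnet a (gdIter α X Y a W0 t) (X i)) := by
  intro ε hε0 hε1
  refine ⟨4000, 4, ?_⟩
  intro C hC n p m μ1 μ2 η α winit u X Y a W0 hn hMean hParam hAssum hMD hML hGR t ht1 ht2 i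
  obtain ⟨hA1, hA2, hA3, hA4, hA5, hA6⟩ := hAssum
  obtain ⟨hη0, hη2, hα, hw0⟩ := hParam
  -- dispose of the degenerate case p = 0
  rcases Nat.eq_zero_or_pos p with hp0 | hppos'
  · exfalso
    subst hp0
    have h1t : (1:ℝ) ≤ (t:ℝ) := by exact_mod_cast ht1
    have h2t : (t:ℝ) ≤ 1 / (Real.sqrt n * 0 * α) - 2 := by exact_mod_cast ht2
    rw [mul_zero, zero_mul, div_zero] at h2t
    linarith only [h1t, h2t]
  -- basic numeric facts
  have hn4 : (4:ℝ) ≤ (n:ℝ) := by exact_mod_cast hn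
  have hn1 : (1:ℝ) ≤ (n:ℝ) := by linarith only [hn4]
  have hnpos : (0:ℝ) < (n:ℝ) := by linarith only [hn1]
  have hC4 : (4000:ℝ) ≤ C := hC
  have hCpos : (0:ℝ) < C := by linarith only [hC4]
  have hp1 : (1:ℝ) ≤ (p:ℝ) := by exact_mod_cast hppos'
  have hppos : (0:ℝ) < (p:ℝ) := by linarith only [hp1]
  have hspp : (0:ℝ) < Real.sqrt p := Real.sqrt_pos.mpr hppos
  have hsn1 : (1:ℝ) ≤ Real.sqrt n := by
    rw [show (1:ℝ) = Real.sqrt 1 by simp]; exact Real.sqrt_le_sqrt hn1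
  have hn002 : (1:ℝ) ≤ (n:ℝ) ^ (0.02:ℝ) := by
    have h := Real.rpow_le_rpow_of_exponent_le hn1 (by norm_num : (0:ℝ) ≤ 0.02)
    rwa [Real.rpow_zero] at h
  have hm1 : (1:ℝ) ≤ (m:ℝ) := by nlinarith only [hA6, hC4, hn002]
  have hmpos : (0:ℝ) < (m:ℝ) := by linarith only [hm1]
  have hmne : (m:ℝ) ≠ 0 := ne_of_gt hmpos
  set sm := Real.sqrt m with hsm_def
  have hsm1 : (1:ℝ) ≤ sm := by
    rw [hsm_def, show (1:ℝ) = Real.sqrt 1 by simp]; exact Real.sqrt_le_sqrt hm1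
  have hsmpos : (0:ℝ) < sm := by linarith only [hsm1]
  have hsmne : sm ≠ 0 := ne_of_gt hsmpos
  have hnne : (n:ℝ) ≠ 0 := ne_of_gt hnpos
  have hsmsq : sm * sm = (m:ℝ) := by rw [hsm_def]; exact Real.mul_self_sqrt (by positivity)
  clear_value sm
  have hsminv : (0:ℝ) < 1/sm := by positivity
  have hαsmn : (0:ℝ) < α/(sm*(n:ℝ)) := div_pos hα (mul_pos hsmpos hnpos)
  have haj : ∀ j, a j = 1/sm ∨ a j = -(1/sm) := by
    intro j; rcases hML j with h | h
    · left; rw [h, hsm_def]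
    · right; rw [h, hsm_def]
  have habs_a : ∀ j, |a j| = 1/sm := by
    intro j; rcases haj j with h | h
    · rw [h]; exact abs_of_nonneg hsminv.le
    · rw [h, abs_neg]; exact abs_of_nonneg hsminv.le
  have hYabs : ∀ k, |Y k| = 1 := by
    intro k; rcases hMD k with h | h <;> rw [h] <;> norm_num
  have hM2nn : (0:ℝ) ≤ (nrm μ1 ^ 2) := sq_nonneg _
  have hLnn : 0 ≤ (Real.log (n:ℝ)) := Real.log_nonneg hn1
  have hLn : (Real.log (n:ℝ)) ≤ (n:ℝ) := by
    have h := Real.log_le_sub_one_of_pos hnpos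
    linarith only [h]
  -- key consequences of (A1), (A2)
  have h051 : Real.sqrt (n:ℝ) ≤ (n:ℝ) ^ (0.51:ℝ) := by
    rw [Real.sqrt_eq_rpow]
    exact Real.rpow_le_rpow_of_exponent_le hn1 (by norm_num)
  have hA1' : C * Real.sqrt n * Real.sqrt p ≤ (nrm μ1 ^ 2) := by
    refine le_trans ?_ hA1
    exact mul_le_mul_of_nonneg_right (mul_le_mul_of_nonneg_left h051 hCpos.le) hspp.le
  have hkey : C^2 * (n:ℝ)^2 * (Real.sqrt n * Real.sqrt p) ≤ (p:ℝ) := by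
    have h1 : (C*(n:ℝ)^2) * (C * Real.sqrt n * Real.sqrt p) ≤ (C*(n:ℝ)^2) * (nrm μ1 ^ 2) :=
      mul_le_mul_of_nonneg_left hA1' (by positivity)
    calc C^2 * (n:ℝ)^2 * (Real.sqrt n * Real.sqrt p)
        = (C*(n:ℝ)^2) * (C * Real.sqrt n * Real.sqrt p) := by ring
      _ ≤ (C*(n:ℝ)^2) * (nrm μ1 ^ 2) := h1
      _ = C * (n:ℝ)^2 * (nrm μ1 ^ 2) := by ring
      _ ≤ p := hA2
  have hsPL : Real.sqrt ((p:ℝ)*(Real.log (n:ℝ))) ≤ Real.sqrt p * Real.sqrt n := by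
    have h1 : (p:ℝ)*(Real.log (n:ℝ)) ≤ (p:ℝ)*n := by
      nlinarith only [mul_nonneg hppos.le (sub_nonneg.mpr hLn)]
    calc Real.sqrt ((p:ℝ)*(Real.log (n:ℝ))) ≤ Real.sqrt ((p:ℝ)*n) := Real.sqrt_le_sqrt h1
      _ = Real.sqrt p * Real.sqrt n := Real.sqrt_mul hppos.le _
  have hPLn : C^2 * (n:ℝ)^2 * Real.sqrt ((p:ℝ)*(Real.log (n:ℝ))) ≤ (p:ℝ) := by
    calc C^2*(n:ℝ)^2*Real.sqrt ((p:ℝ)*(Real.log (n:ℝ))) ≤ C^2*(n:ℝ)^2*(Real.sqrt p * Real.sqrt n) :=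
          mul_le_mul_of_nonneg_left hsPL (by positivity)
      _ = C^2*(n:ℝ)^2*(Real.sqrt n * Real.sqrt p) := by ring
      _ ≤ p := hkey
  have hn2 : (1:ℝ) ≤ (n:ℝ)^2 := by nlinarith only [hn1, sq_nonneg ((n:ℝ)-1)]
  have hnsq : (n:ℝ) ≤ (n:ℝ)^2 := by
    nlinarith only [mul_nonneg hnpos.le (sub_nonneg.mpr hn1)]
  have hCsq : (16000000:ℝ) ≤ C^2 := by nlinarith only [hC4, sq_nonneg (C-4000)]
  have hsPLnn : (0:ℝ) ≤ Real.sqrt ((p:ℝ)*(Real.log (n:ℝ))) := Real.sqrt_nonneg _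
  have hPL16 : (16000000:ℝ) * ((n:ℝ)^2 * Real.sqrt ((p:ℝ)*(Real.log (n:ℝ)))) ≤ (p:ℝ) := by
    nlinarith only [hPLn,
      mul_nonneg (sub_nonneg.mpr hCsq) (mul_nonneg (sq_nonneg (n:ℝ)) hsPLnn)]
  have hM2n : (4000:ℝ) * ((n:ℝ)^2 * (nrm μ1 ^ 2)) ≤ (p:ℝ) := by
    nlinarith only [hA2,
      mul_nonneg (mul_nonneg (sub_nonneg.mpr hC4) (sq_nonneg (n:ℝ))) hM2nn]
  have hPL1 : (16000000:ℝ) * Real.sqrt ((p:ℝ)*(Real.log (n:ℝ))) ≤ (p:ℝ) := by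
    nlinarith only [hPL16, mul_nonneg (sub_nonneg.mpr hn2) hsPLnn]
  have hM21 : (4000:ℝ) * (nrm μ1 ^ 2) ≤ (p:ℝ) := by
    nlinarith only [hM2n, mul_nonneg (sub_nonneg.mpr hn2) hM2nn]
  -- good run conditions
  obtain ⟨⟨hB1, hB2, _, _⟩, hC1, _, hD1, _, _, _⟩ := hGR
  -- norms of the data
  have hx2 : ∀ k : Fin n, (p:ℝ)/2 ≤ nrm (X k)^2 ∧ nrm (X k)^2 ≤ 2*(p:ℝ) := by
    intro k
    have h := (hB1 k).2
    rw [abs_le] at h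
    constructor <;> linarith only [h.1, h.2, hM21, hPL1, hM2nn, hsPLnn, hppos]
  set Bc := (nrm μ1 ^ 2) + 10 * Real.sqrt ((p:ℝ) * (Real.log (n:ℝ))) with hBc_def
  clear_value Bc
  have hBcnn : (0:ℝ) ≤ Bc := by rw [hBc_def]; positivity
  have hcross : ∀ k k' : Fin n, k ≠ k' → |dot (X k) (X k')| ≤ Bc := by
    intro k k' hne
    have h2 := hB2 k k' hne
    have h3 := abs_dot_ctr hMean (u k) (u k')
    have h4 : |dot (X k) (X k')| - |dot (ctr μ1 μ2 (u k)) (ctr μ1 μ2 (u k'))| ≤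
        |dot (X k) (X k') - dot (ctr μ1 μ2 (u k)) (ctr μ1 μ2 (u k'))| :=
      abs_sub_abs_le_abs_sub _ _
    rw [hBc_def]
    linarith only [h2, h3, h4]
  have hq1 : (n:ℝ)*(nrm μ1 ^ 2) ≤ (n:ℝ)^2*(nrm μ1 ^ 2) := mul_le_mul_of_nonneg_right hnsq hM2nn
  have hq2 : (n:ℝ)*Real.sqrt ((p:ℝ)*(Real.log (n:ℝ))) ≤ (n:ℝ)^2*Real.sqrt ((p:ℝ)*(Real.log (n:ℝ))) :=
    mul_le_mul_of_nonneg_right hnsq hsPLnn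
  have hnBc : (n:ℝ)*Bc ≤ (p:ℝ)/2000 := by
    rw [hBc_def]
    nlinarith only [hq1, hq2, hM2n, hPL16]
  -- bound on the initialization
  have hW0n : ∀ j, dot (W0 j) (W0 j) ≤ 3/2 * winit^2 * m * p := by
    intro j
    have hle : dot (W0 j) (W0 j) = ∑ k, (W0 j k)^2 :=
      Finset.sum_congr rfl fun k _ => (sq _).symm
    rw [hle]
    refine le_trans (Finset.single_le_sum (f := fun j => ∑ k, (W0 j k)^2)
      (fun j _ => Finset.sum_nonneg fun k _ => sq_nonneg _) (Finset.mem_univ j)) hC1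
  set H := 2 * winit * sm * (p:ℝ) with hH_def
  clear_value H
  have hHnn : 0 ≤ H := by
    rw [hH_def]
    exact mul_nonneg (mul_nonneg (mul_nonneg (by norm_num) hw0) hsmpos.le) hppos.le
  have hMnn : (0:ℝ) ≤ α*p/(2000*(sm*(n:ℝ))) :=
    le_of_lt (div_pos (mul_pos hα hppos) (by positivity))
  have hH0 : ∀ (j : Fin m) (k : Fin n), |dot (W0 j) (X k)| ≤ H := by
    intro j k
    refine le_trans (abs_dot_le' _ _) ?_
    have ha : (nrm (W0 j))^2 ≤ 3/2*winit^2*m*p := by rw [sq_nrm]; exact hW0n j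
    have hb : (nrm (X k))^2 ≤ 2*(p:ℝ) := (hx2 k).2
    have h2 : (nrm (W0 j) * nrm (X k))^2 ≤ H^2 := by
      rw [hH_def]
      have e : (2 * winit * sm * (p:ℝ))^2 = 4*winit^2*(m:ℝ)*(p:ℝ)^2 := by
        rw [← hsmsq]; ring
      rw [e, mul_pow]
      nlinarith only [ha, hb, sq_nonneg (nrm (W0 j)), sq_nonneg (nrm (X k)),
        sq_nonneg winit, hppos.le, hmpos.le,
        mul_nonneg (mul_nonneg (sq_nonneg winit) hmpos.le) (sq_nonneg (p:ℝ))]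
    have hnn0 : (0:ℝ) ≤ nrm (W0 j) * nrm (X k) :=
      mul_nonneg (Real.sqrt_nonneg _) (Real.sqrt_nonneg _)
    calc nrm (W0 j) * nrm (X k) = Real.sqrt ((nrm (W0 j)*nrm (X k))^2) :=
          (Real.sqrt_sq hnn0).symm
      _ ≤ Real.sqrt (H^2) := Real.sqrt_le_sqrt h2
      _ = H := Real.sqrt_sq hHnn
  -- bound on sm * H from (A5)
  have hm32 : (m:ℝ) ^ ((3:ℝ)/2) = (m:ℝ) * sm := by
    rw [hsm_def, show (3:ℝ)/2 = 1 + 1/2 by norm_num, Real.rpow_add hmpos, Real.rpow_one,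
      ← Real.sqrt_eq_rpow]
  have hA5' : winit * n * ((m:ℝ)*sm) * p ≤ α * (nrm μ1 ^ 2) := by rw [← hm32]; exact hA5
  have hM2C : (nrm μ1 ^ 2) ≤ (p:ℝ)/4000 := by linarith only [hM21]
  have hsmH : (n:ℝ) * (sm*H) ≤ α * (p:ℝ)/2000 := by
    have h1 : (n:ℝ)*(sm*H) = 2*(winit * (n:ℝ) * (m:ℝ) * (p:ℝ)) := by
      rw [hH_def, ← hsmsq]; ring
    have h2 : winit * (n:ℝ) * (m:ℝ) * (p:ℝ) ≤ winit * n * ((m:ℝ)*sm) * p := by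
      nlinarith only [mul_nonneg (mul_nonneg (mul_nonneg hw0 hnpos.le) hmpos.le)
        (mul_nonneg hppos.le (sub_nonneg.mpr hsm1))]
    have h3 : α * (nrm μ1 ^ 2) ≤ α * ((p:ℝ)/4000) := mul_le_mul_of_nonneg_left hM2C hα.le
    rw [h1]; linarith only [hA5', h2, h3]
  -- step size facts
  have hCnpα : C * n * p * α ≤ 1 := by
    have h := (le_div_iff₀ (by positivity : (0:ℝ) < C*n*p)).mp hA4
    linarith only [h]
  have hCn1 : (1:ℝ) ≤ C*n := by nlinarith only [hC4, hn1]
  have hαp1 : α * (p:ℝ) ≤ 1 := by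
    nlinarith only [hCnpα, mul_nonneg (mul_nonneg hα.le hppos.le) (sub_nonneg.mpr hCn1)]
  have hT : ∀ s : ℕ, s ≤ t → (s:ℝ) * (α*p) ≤ 1 := by
    intro s hs
    have hst : (s:ℝ) ≤ (t:ℝ) := by exact_mod_cast hs
    have h2 : (t:ℝ) ≤ 1/(Real.sqrt n * p * α) := by linarith only [ht2]
    have hpos : (0:ℝ) < Real.sqrt n * p * α := by positivity
    have h3 := (le_div_iff₀ hpos).mp (le_trans hst h2)
    nlinarith only [h3,
      mul_nonneg (mul_nonneg (mul_nonneg (Nat.cast_nonneg s) hα.le) hppos.le)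
        (sub_nonneg.mpr hsn1)]
  -- the recurrence
  have hrec : ∀ (s : ℕ) (j : Fin m) (v : Vec p),
      dot (gdIter α X Y a W0 (s+1) j) v = dot (gdIter α X Y a W0 s j) v + (α * a j / n) *
        ∑ k, lossG (Y k * nnet a (gdIter α X Y a W0 s) (X k)) *
          reluD (dot (gdIter α X Y a W0 s j) (X k)) * (Y k * dot (X k) v) :=
    fun s j v => dot_gdStep α X Y a (gdIter α X Y a W0 s) j v
  have habsc : ∀ j, |α * a j / n| = α/(sm*n) := by
    intro j
    rw [abs_div, abs_mul, habs_a j, abs_of_pos hα, Nat.abs_cast, mul_one_div, div_div]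
  -- step decomposition: self term plus a small rest
  have hstep : ∀ (s : ℕ) (j : Fin m) (i0 : Fin n),
      ∃ R : ℝ, |R| ≤ (n:ℝ)*Bc ∧
        dot (gdIter α X Y a W0 (s+1) j) (X i0) = dot (gdIter α X Y a W0 s j) (X i0) +
          (α * a j / n) * (lossG (Y i0 * nnet a (gdIter α X Y a W0 s) (X i0)) *
            reluD (dot (gdIter α X Y a W0 s j) (X i0)) * (Y i0 * nrm (X i0)^2) + R) := by
    intro s j i0
    refine ⟨∑ k ∈ Finset.univ.erase i0, lossG (Y k * nnet a (gdIter α X Y a W0 s) (X k)) *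
      reluD (dot (gdIter α X Y a W0 s j) (X k)) * (Y k * dot (X k) (X i0)), ?_, ?_⟩
    · refine le_trans (Finset.abs_sum_le_sum_abs _ _) ?_
      have hbound : ∀ k ∈ Finset.univ.erase i0,
          |lossG (Y k * nnet a (gdIter α X Y a W0 s) (X k)) *
            reluD (dot (gdIter α X Y a W0 s j) (X k)) * (Y k * dot (X k) (X i0))| ≤ Bc := by
        intro k hk
        have hkne : k ≠ i0 := Finset.ne_of_mem_erase hk
        have hg : |lossG (Y k * nnet a (gdIter α X Y a W0 s) (X k))| ≤ 1 := by
          rw [abs_of_pos (lossG_pos' _)]; exact lossG_le_one' _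
        have hφ : |reluD (dot (gdIter α X Y a W0 s j) (X k))| ≤ 1 := by
          rw [abs_of_nonneg (reluD_nonneg _)]; exact reluD_le_one _
        have hd : |dot (X k) (X i0)| ≤ Bc := hcross k i0 hkne
        have hgnn := abs_nonneg (lossG (Y k * nnet a (gdIter α X Y a W0 s) (X k)))
        have hφnn := abs_nonneg (reluD (dot (gdIter α X Y a W0 s j) (X k)))
        have hdnn := abs_nonneg (dot (X k) (X i0))
        calc |lossG (Y k * nnet a (gdIter α X Y a W0 s) (X k)) *
              reluD (dot (gdIter α X Y a W0 s j) (X k)) * (Y k * dot (X k) (X i0))|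
            = |lossG (Y k * nnet a (gdIter α X Y a W0 s) (X k))| *
              |reluD (dot (gdIter α X Y a W0 s j) (X k))| * (|Y k| * |dot (X k) (X i0)|) := by
              rw [abs_mul, abs_mul, abs_mul]
          _ = |lossG (Y k * nnet a (gdIter α X Y a W0 s) (X k))| *
              |reluD (dot (gdIter α X Y a W0 s j) (X k))| * |dot (X k) (X i0)| := by
              rw [hYabs k, one_mul]
          _ ≤ 1 * 1 * Bc := by
              apply mul_le_mul (mul_le_mul hg hφ hφnn (by norm_num)) hd hdnn (by norm_num)
          _ = Bc := by ring
      refine le_trans (Finset.sum_le_card_nsmul _ _ Bc hbound) ?_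
      rw [nsmul_eq_mul]
      have hcard : ((Finset.univ.erase i0).card : ℝ) ≤ (n:ℝ) := by
        have h1 := Finset.card_erase_le (s := (Finset.univ : Finset (Fin n))) (a := i0)
        have h2 : (Finset.univ : Finset (Fin n)).card = n :=
          Finset.card_univ.trans (Fintype.card_fin n)
        exact_mod_cast le_trans h1 (le_of_eq h2)
      exact mul_le_mul_of_nonneg_right hcard hBcnn
    · rw [hrec s j (X i0), sq_nrm,
        ← Finset.add_sum_erase Finset.univ _ (Finset.mem_univ i0)]
  -- uniform bound on the self term
  have hselfb : ∀ (s : ℕ) (j : Fin m) (i0 : Fin n),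
      |lossG (Y i0 * nnet a (gdIter α X Y a W0 s) (X i0)) *
        reluD (dot (gdIter α X Y a W0 s j) (X i0)) * (Y i0 * nrm (X i0)^2)| ≤ 2*(p:ℝ) := by
    intro s j i0
    have hg : |lossG (Y i0 * nnet a (gdIter α X Y a W0 s) (X i0))| ≤ 1 := by
      rw [abs_of_pos (lossG_pos' _)]; exact lossG_le_one' _
    have hφ : |reluD (dot (gdIter α X Y a W0 s j) (X i0))| ≤ 1 := by
      rw [abs_of_nonneg (reluD_nonneg _)]; exact reluD_le_one _
    have hd : |nrm (X i0)^2| ≤ 2*(p:ℝ) := by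
      rw [abs_of_nonneg (sq_nonneg _)]; exact (hx2 i0).2
    calc |lossG (Y i0 * nnet a (gdIter α X Y a W0 s) (X i0)) *
          reluD (dot (gdIter α X Y a W0 s j) (X i0)) * (Y i0 * nrm (X i0)^2)|
        = |lossG (Y i0 * nnet a (gdIter α X Y a W0 s) (X i0))| *
          |reluD (dot (gdIter α X Y a W0 s j) (X i0))| * (|Y i0| * |nrm (X i0)^2|) := by
          rw [abs_mul, abs_mul, abs_mul]
      _ = |lossG (Y i0 * nnet a (gdIter α X Y a W0 s) (X i0))| *
          |reluD (dot (gdIter α X Y a W0 s j) (X i0))| * |nrm (X i0)^2| := by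
          rw [hYabs i0, one_mul]
      _ ≤ 1 * 1 * (2*(p:ℝ)) := by
          apply mul_le_mul (mul_le_mul hg hφ (abs_nonneg _) (by norm_num)) hd (abs_nonneg _)
            (by norm_num)
      _ = 2*(p:ℝ) := by ring
  -- uniform bound on per-step movement
  have hmove : ∀ s : ℕ, ∀ (j : Fin m) (k : Fin n),
      |dot (gdIter α X Y a W0 s j) (X k) - dot (W0 j) (X k)| ≤ (s:ℝ) * (3*α*p/(sm*n)) := by
    intro s
    induction s with
    | zero => intro j k; simp [gdIter]
    | succ s ih =>
      intro j k
      obtain ⟨R, hR, heq⟩ := hstep s j k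
      have hself := hselfb s j k
      have hsum : |lossG (Y k * nnet a (gdIter α X Y a W0 s) (X k)) *
          reluD (dot (gdIter α X Y a W0 s j) (X k)) * (Y k * nrm (X k)^2) + R| ≤ 3*(p:ℝ) := by
        refine le_trans (abs_add_le _ _) ?_
        linarith only [hself, le_trans hR hnBc, hppos]
      have hc : |(α * a j / n) * (lossG (Y k * nnet a (gdIter α X Y a W0 s) (X k)) *
          reluD (dot (gdIter α X Y a W0 s j) (X k)) * (Y k * nrm (X k)^2) + R)|
          ≤ (α/(sm*n)) * (3*(p:ℝ)) := by
        rw [abs_mul, habsc j]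
        exact mul_le_mul_of_nonneg_left hsum hαsmn.le
      have habs3 : ∀ A B D : ℝ, |A + D - B| ≤ |A - B| + |D| := fun A B D => by
        rw [show A + D - B = (A - B) + D by ring]; exact abs_add_le _ _
      have htri : |dot (gdIter α X Y a W0 (s+1) j) (X k) - dot (W0 j) (X k)| ≤
          |dot (gdIter α X Y a W0 s j) (X k) - dot (W0 j) (X k)| +
          |(α * a j / n) * (lossG (Y k * nnet a (gdIter α X Y a W0 s) (X k)) *
            reluD (dot (gdIter α X Y a W0 s j) (X k)) * (Y k * nrm (X k)^2) + R)| := by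
        rw [heq]; exact habs3 _ _ _
      have e : (α/(sm*n))*(3*(p:ℝ)) = 3*α*p/(sm*n) := by ring
      have ihs := ih j k
      rw [e] at hc
      push_cast
      linarith only [htri, ihs, hc]
  -- uniform bound on the network values, and hence on the loss derivative
  have hnetb : ∀ s : ℕ, s ≤ t → ∀ k : Fin n, |nnet a (gdIter α X Y a W0 s) (X k)| ≤ 1 := by
    intro s hs k
    have h1 : ∀ j : Fin m, |a j * relu (dot (gdIter α X Y a W0 s j) (X k))| ≤
        (1/sm)*(H + (s:ℝ)*(3*α*p/(sm*n))) := by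
      intro j
      rw [abs_mul, habs_a j]
      have h2 : |relu (dot (gdIter α X Y a W0 s j) (X k))| ≤
          |dot (gdIter α X Y a W0 s j) (X k)| := by
        rw [abs_of_nonneg (relu_nonneg' _)]; exact relu_le_abs' _
      have h3 : |dot (gdIter α X Y a W0 s j) (X k)| ≤ H + (s:ℝ)*(3*α*p/(sm*n)) := by
        have hm := hmove s j k
        have hh := hH0 j k
        have h5 : |dot (gdIter α X Y a W0 s j) (X k)| ≤ |dot (W0 j) (X k)| +
            |dot (gdIter α X Y a W0 s j) (X k) - dot (W0 j) (X k)| := by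
          have h6 := abs_add_le (dot (W0 j) (X k))
            (dot (gdIter α X Y a W0 s j) (X k) - dot (W0 j) (X k))
          rw [show dot (W0 j) (X k) + (dot (gdIter α X Y a W0 s j) (X k) -
            dot (W0 j) (X k)) = dot (gdIter α X Y a W0 s j) (X k) by ring] at h6
          exact h6
        linarith only [h5, hm, hh]
      exact mul_le_mul_of_nonneg_left (le_trans h2 h3) hsminv.le
    have h4 : |nnet a (gdIter α X Y a W0 s) (X k)| ≤
        (m:ℝ) * ((1/sm)*(H + (s:ℝ)*(3*α*p/(sm*n)))) := by
      refine le_trans (Finset.abs_sum_le_sum_abs _ _) ?_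
      refine le_trans (Finset.sum_le_card_nsmul _ _ _ fun j _ => h1 j) ?_
      rw [nsmul_eq_mul]
      have h7 : ((Finset.univ : Finset (Fin m)).card : ℝ) = (m:ℝ) := by
        rw [Finset.card_univ, Fintype.card_fin]
      rw [h7]
    have e1 : (m:ℝ) * ((1/sm)*(H + (s:ℝ)*(3*α*p/(sm*n)))) =
        sm*H + (s:ℝ)*(3*(α*p))/n := by
      rw [← hsmsq]; field_simp
    have hsαp := hT s hs
    have e2 : sm*H ≤ 1/2000 := by
      nlinarith only [hsmH, hαp1,
        mul_nonneg (sub_nonneg.mpr hn1) (mul_nonneg hsmpos.le hHnn)]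
    have e3 : (s:ℝ)*(3*(α*p))/n ≤ 3/4 := by
      rw [div_le_iff₀ hnpos]
      linarith only [hsαp, hn4]
    rw [e1] at h4
    linarith only [h4, e2, e3]
  have hg14 : ∀ s : ℕ, s ≤ t → ∀ k,
      1/4 ≤ lossG (Y k * nnet a (gdIter α X Y a W0 s) (X k)) := by
    intro s hs k
    apply lossG_ge_quarter
    have h := hnetb s hs k
    have h2 : Y k * nnet a (gdIter α X Y a W0 s) (X k) ≤
        |Y k * nnet a (gdIter α X Y a W0 s) (X k)| := le_abs_self _
    rw [abs_mul, hYabs k, one_mul] at h2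
    linarith only [h, h2]
  -- the set of good neurons for datapoint i
  set G : Finset (Fin m) :=
    Finset.univ.filter (fun j => 0 < a j * Y i ∧ 0 < dot (W0 j) (X i)) with hG_def
  clear_value G
  have hGcard : (m:ℝ)/7 ≤ (G.card : ℝ) := by
    have hD := hD1 i
    rcases hMD i with hYi | hYi
    · have hGE : G = (posNeurons a).filter (fun j => 0 < dot (W0 j) (X i)) := by
        ext j
        simp only [hG_def, posNeurons, Finset.mem_filter, Finset.mem_univ, true_and, hYi,
          mul_one]
      rw [hGE]; exact hD.1
    · have hGE : G = (negNeurons a).filter (fun j => 0 < dot (W0 j) (X i)) := by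
        ext j
        simp only [hG_def, negNeurons, Finset.mem_filter, Finset.mem_univ, true_and, hYi,
          mul_neg, mul_one, neg_pos]
      rw [hGE]; exact hD.2
  have haYval : ∀ j : Fin m, a j * Y i = 1/sm ∨ a j * Y i = -(1/sm) := by
    intro j
    rcases haj j with h | h <;> rcases hMD i with h' | h' <;> rw [h, h'] <;>
      [left; right; right; left] <;> ring
  have hmemG : ∀ j ∈ G, a j * Y i = 1/sm ∧ 0 < dot (W0 j) (X i) := by
    intro j hj
    rw [hG_def, Finset.mem_filter] at hj
    obtain ⟨-, hpos, hW⟩ := hj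
    refine ⟨?_, hW⟩
    rcases haYval j with h | h
    · exact h
    · exfalso
      rw [h] at hpos
      have h8 : (0:ℝ) < 1/sm := by positivity
      linarith only [hpos, h8]
  -- the good neurons grow linearly
  have hGood : ∀ s : ℕ, s ≤ t → ∀ j ∈ G,
      dot (W0 j) (X i) + (s:ℝ)*(α*p/(9*(sm*n))) ≤ dot (gdIter α X Y a W0 s j) (X i) := by
    intro s
    induction s with
    | zero => intro _ j _; simp [gdIter]
    | succ s ih =>
      intro hs j hj
      have hs' : s ≤ t := Nat.le_of_succ_le hs
      have ihs := ih hs' j hj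
      obtain ⟨haY, hW0pos⟩ := hmemG j hj
      have hδnn : (0:ℝ) ≤ α*p/(9*(sm*n)) :=
        le_of_lt (div_pos (mul_pos hα hppos) (by positivity))
      have hsnn : (0:ℝ) ≤ (s:ℝ) := Nat.cast_nonneg s
      have hdpos : 0 < dot (gdIter α X Y a W0 s j) (X i) := by
        linarith only [ihs, hW0pos, mul_nonneg hsnn hδnn]
      obtain ⟨R, hR, heq⟩ := hstep s j i
      have hφ : reluD (dot (gdIter α X Y a W0 s j) (X i)) = 1 := if_pos hdpos
      rw [heq, hφ]
      have hgl := hg14 s hs' i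
      have hx := hx2 i
      have e1 : (α * a j / ↑n) * (lossG (Y i * nnet a (gdIter α X Y a W0 s) (X i)) * 1 *
            (Y i * nrm (X i) ^ 2) + R)
          = (α/(sm*n)) * (lossG (Y i * nnet a (gdIter α X Y a W0 s) (X i)) * nrm (X i)^2) *
            (sm * (a j * Y i)) + (α * a j / ↑n) * R := by
        field_simp
      have e2 : sm * (a j * Y i) = 1 := by rw [haY]; field_simp
      rw [e1, e2, mul_one]
      have e3 : (α/(sm*n)) * ((p:ℝ)/8) ≤ (α/(sm*n)) *
          (lossG (Y i * nnet a (gdIter α X Y a W0 s) (X i)) * nrm (X i)^2) := by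
        apply mul_le_mul_of_nonneg_left ?_ hαsmn.le
        nlinarith only [hx.1, hgl, hppos,
          mul_nonneg (sub_nonneg.mpr hgl) (sub_nonneg.mpr hx.1),
          mul_nonneg (sub_nonneg.mpr hgl) hppos.le]
      have e4 : -((α/(sm*n))*((p:ℝ)/2000)) ≤ (α * a j / ↑n) * R := by
        have h1 : |(α * a j / ↑n) * R| ≤ (α/(sm*n))*((p:ℝ)/2000) := by
          rw [abs_mul, habsc j]
          exact mul_le_mul_of_nonneg_left (le_trans hR hnBc) hαsmn.le
        have h9 := neg_abs_le ((α * a j / ↑n) * R)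
        linarith only [h1, h9]
      have e5 : α*p/(9*(sm*n)) ≤ (α/(sm*n))*((p:ℝ)/8) - (α/(sm*n))*((p:ℝ)/2000) := by
        have h1 : (α/(sm*n))*((p:ℝ)/8) - (α/(sm*n))*((p:ℝ)/2000) - α*p/(9*(sm*n)) =
            (α*p/(sm*n)) * (1/8 - 1/2000 - 1/9) := by ring
        have h2 : (0:ℝ) < α*p/(sm*n) := div_pos (mul_pos hα hppos) (mul_pos hsmpos hnpos)
        linarith only [h1, h2]
      push_cast
      linarith only [ihs, e3, e4, e5]
  -- the bad neurons stay small
  have hBad : ∀ s : ℕ, s ≤ t → ∀ j : Fin m, a j * Y i < 0 →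
      dot (gdIter α X Y a W0 s j) (X i) ≤
        max (dot (W0 j) (X i)) 0 + α*p/(2000*(sm*n)) := by
    intro s
    induction s with
    | zero =>
      intro _ j _
      have h1 : (0:ℝ) ≤ α*p/(2000*(sm*n)) := hMnn
      have h2 := le_max_left (dot (W0 j) (X i)) 0
      simp only [gdIter]
      linarith only [h1, h2]
    | succ s ih =>
      intro hs j hneg
      have hs' : s ≤ t := Nat.le_of_succ_le hs
      have ihs := ih hs' j hneg
      have haY : a j * Y i = -(1/sm) := by
        rcases haYval j with h | h
        · exfalso
          rw [h] at hneg
          have h8 : (0:ℝ) < 1/sm := by positivity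
          linarith only [hneg, h8]
        · exact h
      obtain ⟨R, hR, heq⟩ := hstep s j i
      have hRb : (α * a j / ↑n) * R ≤ (α/(sm*n))*((p:ℝ)/2000) := by
        have h1 : |(α * a j / ↑n) * R| ≤ (α/(sm*n))*((p:ℝ)/2000) := by
          rw [abs_mul, habsc j]
          exact mul_le_mul_of_nonneg_left (le_trans hR hnBc) hαsmn.le
        linarith only [h1, le_abs_self ((α * a j / ↑n) * R)]
      rcases le_or_gt (dot (gdIter α X Y a W0 s j) (X i)) 0 with hd0 | hd0
      · have hφ : reluD (dot (gdIter α X Y a W0 s j) (X i)) = 0 := if_neg (not_lt.mpr hd0)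
        rw [heq, hφ]
        have hmax : (0:ℝ) ≤ max (dot (W0 j) (X i)) 0 := le_max_right _ _
        have e6 : (α/(sm*n))*((p:ℝ)/2000) = α*p/(2000*(sm*n)) := by ring
        rw [mul_zero, zero_mul, zero_add]
        rw [e6] at hRb
        linarith only [hd0, hRb, hmax]
      · have hφ : reluD (dot (gdIter α X Y a W0 s j) (X i)) = 1 := if_pos hd0
        rw [heq, hφ]
        have hgl := hg14 s hs' i
        have hx := hx2 i
        have e1 : (α * a j / ↑n) * (lossG (Y i * nnet a (gdIter α X Y a W0 s) (X i)) * 1 *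
              (Y i * nrm (X i) ^ 2) + R)
            = (α/(sm*n)) * (lossG (Y i * nnet a (gdIter α X Y a W0 s) (X i)) * nrm (X i)^2) *
              (sm * (a j * Y i)) + (α * a j / ↑n) * R := by
          field_simp
        have e2 : sm * (a j * Y i) = -1 := by rw [haY]; field_simp
        rw [e1, e2]
        have e3 : (α/(sm*n)) * ((p:ℝ)/8) ≤ (α/(sm*n)) *
            (lossG (Y i * nnet a (gdIter α X Y a W0 s) (X i)) * nrm (X i)^2) := by
          apply mul_le_mul_of_nonneg_left ?_ hαsmn.le
          nlinarith only [hx.1, hgl, hppos,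
            mul_nonneg (sub_nonneg.mpr hgl) (sub_nonneg.mpr hx.1),
            mul_nonneg (sub_nonneg.mpr hgl) hppos.le]
        have h0s : (0:ℝ) < α*p/(sm*n) := div_pos (mul_pos hα hppos) (mul_pos hsmpos hnpos)
        have eg : α/(sm*(n:ℝ))*((p:ℝ)/8) - α/(sm*(n:ℝ))*((p:ℝ)/2000) =
            (α*p/(sm*(n:ℝ)))*(1/8 - 1/2000) := by ring
        linarith only [ihs, e3, hRb, h0s, eg]
  -- final assembly
  have htt : t ≤ t := le_refl t
  have hrelu_eq : Y i * nnet a (gdIter α X Y a W0 t) (X i) =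
      ∑ j, (a j * Y i) * relu (dot (gdIter α X Y a W0 t j) (X i)) := by
    rw [nnet, Finset.mul_sum]
    exact Finset.sum_congr rfl fun j _ => by ring
  have hGoodSum : ∀ j ∈ G, (t:ℝ)*(α*p/(9*((m:ℝ)*n))) ≤
      (a j * Y i) * relu (dot (gdIter α X Y a W0 t j) (X i)) := by
    intro j hj
    obtain ⟨haY, hW0pos⟩ := hmemG j hj
    have h1 := hGood t htt j hj
    have hδnn : (0:ℝ) ≤ α*p/(9*(sm*n)) :=
      le_of_lt (div_pos (mul_pos hα hppos) (by positivity))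
    have htnn : (0:ℝ) ≤ (t:ℝ) := Nat.cast_nonneg t
    have hdpos : 0 < dot (gdIter α X Y a W0 t j) (X i) := by
      linarith only [h1, hW0pos, mul_nonneg htnn hδnn]
    rw [relu_of_pos' hdpos, haY]
    have h2 : (t:ℝ)*(α*p/(9*(sm*n))) ≤ dot (gdIter α X Y a W0 t j) (X i) := by
      linarith only [h1, hW0pos]
    have e1 : (t:ℝ)*(α*p/(9*((m:ℝ)*n))) = (1/sm)*((t:ℝ)*(α*p/(9*(sm*n)))) := by
      rw [← hsmsq]; field_simp
    rw [e1]
    exact mul_le_mul_of_nonneg_left h2 hsminv.le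
  have hBadSum : ∀ j ∈ Finset.univ.filter
      (fun j => ¬(0 < a j * Y i ∧ 0 < dot (W0 j) (X i))),
      -((1/sm)*(H + α*p/(2000*(sm*n)))) ≤
        (a j * Y i) * relu (dot (gdIter α X Y a W0 t j) (X i)) := by
    intro j _
    have hBnn : (0:ℝ) ≤ (1/sm)*(H + α*p/(2000*(sm*n))) :=
      mul_nonneg hsminv.le (add_nonneg hHnn hMnn)
    rcases lt_trichotomy (a j * Y i) 0 with hneg | hzero | hpos
    · have haY : a j * Y i = -(1/sm) := by
        rcases haYval j with h | h
        · exfalso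
          rw [h] at hneg
          have h8 : (0:ℝ) < 1/sm := by positivity
          linarith only [hneg, h8]
        · exact h
      have hb := hBad t htt j hneg
      have hmax : max (dot (W0 j) (X i)) 0 ≤ H :=
        max_le (le_trans (le_abs_self _) (hH0 j i)) hHnn
      have hrel : relu (dot (gdIter α X Y a W0 t j) (X i)) ≤ H + α*p/(2000*(sm*n)) := by
        apply max_le (by linarith only [hb, hmax]) (add_nonneg hHnn hMnn)
      rw [haY]
      have h3 : (1/sm) * relu (dot (gdIter α X Y a W0 t j) (X i)) ≤
          (1/sm)*(H + α*p/(2000*(sm*n))) :=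
        mul_le_mul_of_nonneg_left hrel hsminv.le
      linarith only [h3]
    · rw [hzero, zero_mul]
      linarith only [hBnn]
    · have h3 : 0 ≤ (a j * Y i) * relu (dot (gdIter α X Y a W0 t j) (X i)) :=
        mul_nonneg hpos.le (relu_nonneg' _)
      linarith only [h3, hBnn]
  have hsplit : Y i * nnet a (gdIter α X Y a W0 t) (X i) =
      (∑ j ∈ G, (a j * Y i) * relu (dot (gdIter α X Y a W0 t j) (X i))) +
      (∑ j ∈ Finset.univ.filter (fun j => ¬(0 < a j * Y i ∧ 0 < dot (W0 j) (X i))),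
        (a j * Y i) * relu (dot (gdIter α X Y a W0 t j) (X i))) := by
    rw [hrelu_eq, hG_def]
    exact (Finset.sum_filter_add_sum_filter_not Finset.univ _ _).symm
  have hGsum : (m:ℝ)/7 * ((t:ℝ)*(α*p/(9*((m:ℝ)*n)))) ≤
      ∑ j ∈ G, (a j * Y i) * relu (dot (gdIter α X Y a W0 t j) (X i)) := by
    have h1 := Finset.card_nsmul_le_sum G _ _ hGoodSum
    rw [nsmul_eq_mul] at h1
    have hbnn : (0:ℝ) ≤ (t:ℝ)*(α*p/(9*((m:ℝ)*n))) := by positivity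
    have h2 : (m:ℝ)/7 * ((t:ℝ)*(α*p/(9*((m:ℝ)*n)))) ≤
        (G.card : ℝ) * ((t:ℝ)*(α*p/(9*((m:ℝ)*n)))) :=
      mul_le_mul_of_nonneg_right hGcard hbnn
    linarith only [h1, h2]
  have hBsum : -((m:ℝ)*((1/sm)*(H + α*p/(2000*(sm*n))))) ≤
      ∑ j ∈ Finset.univ.filter (fun j => ¬(0 < a j * Y i ∧ 0 < dot (W0 j) (X i))),
        (a j * Y i) * relu (dot (gdIter α X Y a W0 t j) (X i)) := by
    have h1 := Finset.card_nsmul_le_sum _ _ _ hBadSum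
    rw [nsmul_eq_mul] at h1
    have hBnn : (0:ℝ) ≤ (1/sm)*(H + α*p/(2000*(sm*n))) :=
      mul_nonneg hsminv.le (add_nonneg hHnn hMnn)
    have hcard : ((Finset.univ.filter
        (fun j => ¬(0 < a j * Y i ∧ 0 < dot (W0 j) (X i)))).card : ℝ) ≤ (m:ℝ) := by
      have h2 := Finset.card_filter_le Finset.univ
        (fun j : Fin m => ¬(0 < a j * Y i ∧ 0 < dot (W0 j) (X i)))
      have h3 : (Finset.univ : Finset (Fin m)).card = m := by
        rw [Finset.card_univ, Fintype.card_fin]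
      exact_mod_cast le_trans h2 (le_of_eq h3)
    nlinarith only [h1, mul_nonneg (sub_nonneg.mpr hcard) hBnn]
  have hlast : 0 < Y i * nnet a (gdIter α X Y a W0 t) (X i) := by
    have e5 : (m:ℝ)/7*((t:ℝ)*(α*p/(9*((m:ℝ)*n)))) = (t:ℝ)*(α*p)/(63*(n:ℝ)) := by
      field_simp
      ring
    have e6 : (m:ℝ)*((1/sm)*(H + α*p/(2000*(sm*n)))) = sm*H + α*p/(2000*(n:ℝ)) := by
      rw [← hsmsq]; field_simp
    have ht1' : (1:ℝ) ≤ (t:ℝ) := by exact_mod_cast ht1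
    have e7 : sm*H ≤ α*p/(2000*(n:ℝ)) := by
      rw [le_div_iff₀ (by positivity : (0:ℝ) < 2000*(n:ℝ))]
      linarith only [hsmH]
    have e8 : α*p/(63*(n:ℝ)) ≤ (t:ℝ)*(α*p)/(63*(n:ℝ)) := by
      apply div_le_div_of_nonneg_right ?_ (by positivity)
      linarith only [mul_nonneg (sub_nonneg.mpr ht1') (mul_nonneg hα.le hppos.le)]
    have e9 : α*p/(63*(n:ℝ)) - 2*(α*p/(2000*(n:ℝ))) = (α*p/(n:ℝ))*(1/63 - 1/1000) := by
      ring
    have e10 : (0:ℝ) < (α*p/(n:ℝ))*(1/63 - 1/1000) :=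
      mul_pos (by positivity) (by norm_num)
    rw [hsplit]
    rw [e5] at hGsum
    rw [e6] at hBsum
    linarith only [hGsum, hBsum, e7, e8, e9, e10]
  rcases hMD i with hYi | hYi
  · rw [hYi, one_mul] at hlast
    rw [hYi]
    exact (Real.sign_of_pos hlast).symm
  · rw [hYi] at hlast
    have hneg : nnet a (gdIter α X Y a W0 t) (X i) < 0 := by linarith only [hlast]
    rw [hYi]
    exact (Real.sign_of_neg hneg).symm

end XOR
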